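/- arXiv:1407.4095 — 10 statements merged into one kernel-verified Lean document; each statement's English description precedes it below -/
import Mathlib

section
/- If a nonnegative matrix M ∈ ℝ^{p×q} admits a psd factorization of size k, then rank(M) ≤ k(k+1)/2. -/
/-!
A symmetric matrix `B` is determined by its entries on unordered pairs of indices, and
`trace (A * B)` is linear in those entries. Hence `M i j = trace (A i * B j)` factors `M`
through `ℝ ^ Sym2 (Fin k)`, a space of dimension `k (k + 1) / 2`.
-/

open Matrix

/-- A psd factorization of size `k` of `M`: symmetric psd matrices `A i`, `B j`
with `M i j = trace (A i * B j)`. -/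
def IsPsdFact {m n : Type*} (M : Matrix m n ℝ) {k : ℕ}
    (A : m → Matrix (Fin k) (Fin k) ℝ) (B : n → Matrix (Fin k) (Fin k) ℝ) : Prop :=
  (∀ i, (A i).PosSemidef) ∧ (∀ j, (B j).PosSemidef) ∧ ∀ i j, M i j = (A i * B j).trace

/-- `M` admits a psd factorization of size `k`. -/
def HasPsdFact {m n : Type*} (M : Matrix m n ℝ) (k : ℕ) : Prop :=
  ∃ (A : m → Matrix (Fin k) (Fin k) ℝ) (B : n → Matrix (Fin k) (Fin k) ℝ), IsPsdFact M A B

/-- The psd rank of `M`: the smallest size of a psd factorization. -/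
noncomputable def psdRank {m n : Type*} (M : Matrix m n ℝ) : ℕ :=
  sInf {k | HasPsdFact M k}

open Finset

namespace Matrix

variable {ι R : Type*} [Fintype ι] [DecidableEq ι]

theorem IsSymm.trace_mul_eq_sum_sym2 [CommSemiring R] (A : Matrix ι ι R) {B : Matrix ι ι R}
    (hB : B.IsSymm) :
    (A * B).trace = ∑ z : Sym2 ι, (∑ x : ι × ι with s(x.1, x.2) = z, A x.1 x.2) *
      Sym2.lift ⟨B, fun a b => hB.apply b a⟩ z := by
  calc (A * B).trace = ∑ x : ι × ι, A x.1 x.2 * Sym2.lift ⟨B, _⟩ s(x.1, x.2) := by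
        simp [trace, mul_apply, Fintype.sum_prod_type, hB.apply]
    _ = ∑ z : Sym2 ι, ∑ x : ι × ι with s(x.1, x.2) = z,
          A x.1 x.2 * Sym2.lift ⟨B, _⟩ s(x.1, x.2) :=
        (sum_fiberwise univ _ _).symm
    _ = _ := by
        simp_rw [sum_mul]
        exact sum_congr rfl fun z _ => sum_congr rfl fun x hx => by rw [(mem_filter.1 hx).2]

theorem rank_le_card_sym2_of_eq_trace_mul {m n : Type*} [Fintype n] [CommRing R]
    [StrongRankCondition R] {M : Matrix m n R} {A : m → Matrix ι ι R} {B : n → Matrix ι ι R}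
    (hB : ∀ j, (B j).IsSymm) (hM : ∀ i j, M i j = (A i * B j).trace) :
    M.rank ≤ Fintype.card (Sym2 ι) := by
  let N : Matrix m (Sym2 ι) R := fun i z => ∑ x : ι × ι with s(x.1, x.2) = z, A i x.1 x.2
  let C : Matrix (Sym2 ι) n R := fun z j => Sym2.lift ⟨B j, fun a b => (hB j).apply b a⟩ z
  have hNC : M = N * C := by
    ext i j
    rw [hM, (hB j).trace_mul_eq_sum_sym2, mul_apply]
  rw [hNC]
  exact (rank_mul_le_left N C).trans (rank_le_card_width N)

end Matrix

theorem rank_le_of_hasPsdFact_general {p q k : ℕ} (M : Matrix (Fin p) (Fin q) ℝ)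
    (h : HasPsdFact M k) :
    M.rank ≤ k * (k + 1) / 2 := by
  obtain ⟨A, B, -, hB, hAB⟩ := h
  calc M.rank ≤ Fintype.card (Sym2 (Fin k)) :=
        rank_le_card_sym2_of_eq_trace_mul (fun j => isHermitian_iff_isSymm.mp (hB j).1) hAB
    _ = k * (k + 1) / 2 := by
        rw [Sym2.card, Fintype.card_fin, Nat.choose_two_right, Nat.add_sub_cancel, Nat.mul_comm]

theorem rank_le_of_hasPsdFact {p q k : ℕ} (M : Matrix (Fin p) (Fin q) ℝ)
    (hM : ∀ i j, 0 ≤ M i j) (h : HasPsdFact M k) :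
    M.rank ≤ k * (k + 1) / 2 :=
  rank_le_of_hasPsdFact_general M h
end

section
/- The 3×3 matrix M with 0 on the diagonal and 1 in all off-diagonal entries admits a psd factorization of size 2, i.e., there exist 2×2 real symmetric psd matrices A_1,A_2,A_3,B_1,B_2,B_3 such that M_{ij} = trace(A_i B_j) for all i,j. -/
open Matrix

theorem Matrix.trace_vecMulVec_self_mul_vecMulVec_self {n R : Type*} [Fintype n] [CommRing R]
    (u w : n → R) : (vecMulVec u u * vecMulVec w w).trace = (u ⬝ᵥ w) ^ 2 := by
  rw [vecMulVec_mul_vecMulVec, trace_vecMulVec, dotProduct_smul, smul_eq_mul, sq]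

theorem hasPsdFact_of_eq_sq_dotProduct {m n : Type*} {M : Matrix m n ℝ} {k : ℕ}
    (u : m → Fin k → ℝ) (w : n → Fin k → ℝ) (hM : ∀ i j, M i j = (u i ⬝ᵥ w j) ^ 2) :
    HasPsdFact M k := by
  refine ⟨fun i => vecMulVec (u i) (u i), fun j => vecMulVec (w j) (w j), ?_, ?_, ?_⟩
  · intro i
    simpa only [star_trivial] using posSemidef_vecMulVec_self_star (u i)
  · intro j
    simpa only [star_trivial] using posSemidef_vecMulVec_self_star (w j)
  · intro i j
    rw [hM, trace_vecMulVec_self_mul_vecMulVec_self]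

theorem derangement3_hasPsdFact_two :
    HasPsdFact (Matrix.of fun i j : Fin 3 => if i = j then (0 : ℝ) else 1) 2 := by
  -- `u i ⊥ w i`, while every other `u i ⬝ᵥ w j` is `±1`.
  refine hasPsdFact_of_eq_sq_dotProduct ![![1, 0], ![0, 1], ![1, 1]]
    ![![0, 1], ![1, 0], ![1, -1]] fun i j => ?_
  fin_cases i <;> fin_cases j <;> simp [dotProduct, Fin.sum_univ_two]
end

section
/- Every Hermitian psd factorization of size k of a nonnegative matrix M gives rise to a real psd factorization of size 2k; in particular, rank_psd(M) ≤ 2·rank_psd^ℂ(M). Concretely, if A is an n×n Hermitian positive semidefinite matrix, then the 2n×2n real symmetric block matrix (1/√2)·[[Re A, Im A],[−Im A, Re A]] is positive semidefinite, and the map A ↦ (1/√2)·[[Re A, Im A],[−Im A, Re A]] preserves trace inner products of Hermitian matrices. -/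
/-!
Sending `C = X + iY` to `[[X, Y], [-Y, X]]` is a ring homomorphism that turns `Cᴴ` into the
transpose. Hence a Hermitian psd `C = Bᴴ B` goes to `(realRep B)ᵀ (realRep B)`, which is psd,
and since the trace of the image is twice the real part of the trace, the rescaling by `1/√2`
on both factors turns `Re tr (C D)` into `tr (realify C * realify D)`. Applied to a Hermitian
psd factorization of a real matrix this gives a real one of twice the size.
-/

open Matrix
open scoped ComplexOrder

/-- The real symmetric block matrix associated to a complex matrix:
`(1/√2) • [[Re A, Im A], [-Im A, Re A]]`. -/
noncomputable def realify {n : ℕ} (A : Matrix (Fin n) (Fin n) ℂ) :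
    Matrix (Fin n ⊕ Fin n) (Fin n ⊕ Fin n) ℝ :=
  (Real.sqrt 2)⁻¹ •
    Matrix.fromBlocks (A.map Complex.re) (A.map Complex.im)
      (-(A.map Complex.im)) (A.map Complex.re)

namespace Matrix

variable {l m n : Type*}

def realRep (C : Matrix m n ℂ) : Matrix (m ⊕ m) (n ⊕ n) ℝ :=
  fromBlocks (C.map Complex.re) (C.map Complex.im) (-(C.map Complex.im)) (C.map Complex.re)

theorem realRep_mul [Fintype m] (C : Matrix l m ℂ) (D : Matrix m n ℂ) :
    realRep (C * D) = realRep C * realRep D := by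
  have hre : (C * D).map Complex.re =
      C.map Complex.re * D.map Complex.re - C.map Complex.im * D.map Complex.im := by
    ext i j
    simp only [map_apply, sub_apply, mul_apply, Complex.mul_re, Complex.re_sum,
      Finset.sum_sub_distrib]
  have him : (C * D).map Complex.im =
      C.map Complex.re * D.map Complex.im + C.map Complex.im * D.map Complex.re := by
    ext i j
    simp only [map_apply, add_apply, mul_apply, Complex.mul_im, Complex.im_sum,
      Finset.sum_add_distrib]
  rw [realRep, realRep, realRep, fromBlocks_multiply, hre, him]
  congr 1 <;> simp only [Matrix.neg_mul, Matrix.mul_neg] <;> abel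

theorem realRep_conjTranspose (C : Matrix m n ℂ) : realRep Cᴴ = (realRep C)ᵀ := by
  ext (i | i) (j | j) <;> simp [realRep, conjTranspose_apply]

theorem trace_realRep [Fintype n] (C : Matrix n n ℂ) : (realRep C).trace = 2 * C.trace.re := by
  simp only [trace, diag, realRep, Fintype.sum_sum_type, fromBlocks_apply₁₁, fromBlocks_apply₂₂,
    map_apply, Complex.re_sum]
  ring

theorem PosSemidef.realRep [Fintype n] {C : Matrix n n ℂ} (hC : C.PosSemidef) :
    C.realRep.PosSemidef := by
  classical
  open scoped MatrixOrder in
  obtain ⟨B, rfl⟩ := CStarAlgebra.nonneg_iff_eq_star_mul_self.mp hC.nonneg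
  rw [star_eq_conjTranspose, realRep_mul, realRep_conjTranspose]
  exact posSemidef_conjTranspose_mul_self _

theorem trace_submatrix_equiv {R : Type*} [AddCommMonoid R] [Fintype m] [Fintype n]
    (A : Matrix n n R) (e : m ≃ n) : (A.submatrix e e).trace = A.trace :=
  e.sum_comp fun i => A i i

end Matrix

theorem realify_eq_smul_realRep {n : ℕ} (C : Matrix (Fin n) (Fin n) ℂ) :
    realify C = (Real.sqrt 2)⁻¹ • C.realRep :=
  rfl

theorem Matrix.PosSemidef.realify {n : ℕ} {C : Matrix (Fin n) (Fin n) ℂ} (hC : C.PosSemidef) :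
    (realify C).PosSemidef :=
  realify_eq_smul_realRep C ▸ hC.realRep.smul (by positivity)

theorem trace_realify_mul {n : ℕ} (C D : Matrix (Fin n) (Fin n) ℂ) :
    (realify C * realify D).trace = (C * D).trace.re := by
  have hsq : (Real.sqrt 2)⁻¹ * (Real.sqrt 2)⁻¹ = 2⁻¹ := by
    rw [← mul_inv, Real.mul_self_sqrt zero_le_two]
  rw [realify_eq_smul_realRep, realify_eq_smul_realRep, smul_mul_smul_comm, trace_smul,
    ← realRep_mul, trace_realRep, hsq, smul_eq_mul, inv_mul_cancel_left₀ two_ne_zero]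

theorem HasPsdFact.of_equiv {m n ι : Type*} [Fintype ι] {k : ℕ} (e : ι ≃ Fin k)
    {M : Matrix m n ℝ} (A : m → Matrix ι ι ℝ) (B : n → Matrix ι ι ℝ)
    (hA : ∀ i, (A i).PosSemidef) (hB : ∀ j, (B j).PosSemidef)
    (hfact : ∀ i j, M i j = (A i * B j).trace) : HasPsdFact M k :=
  ⟨fun i => (A i).submatrix e.symm e.symm, fun j => (B j).submatrix e.symm e.symm,
    fun i => (hA i).submatrix _, fun j => (hB j).submatrix _,
    fun i j => by rw [submatrix_mul_equiv, trace_submatrix_equiv, hfact]⟩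

theorem hermitian_fact_to_real_fact_general {p q k : ℕ} (M : Matrix (Fin p) (Fin q) ℝ)
    (A : Fin p → Matrix (Fin k) (Fin k) ℂ) (B : Fin q → Matrix (Fin k) (Fin k) ℂ)
    (hA : ∀ i, (A i).PosSemidef) (hB : ∀ j, (B j).PosSemidef)
    (hfact : ∀ i j, (M i j : ℂ) = (A i * B j).trace) :
    HasPsdFact M (2 * k) ∧
    (∀ (n : ℕ) (C : Matrix (Fin n) (Fin n) ℂ), C.PosSemidef → (realify C).PosSemidef) ∧
    (∀ (n : ℕ) (C D : Matrix (Fin n) (Fin n) ℂ), C.IsHermitian → D.IsHermitian →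
      (realify C * realify D).trace = ((C * D).trace).re) := by
  refine ⟨?_, fun _ _ hC => hC.realify, fun _ C D _ _ => trace_realify_mul C D⟩
  refine HasPsdFact.of_equiv (finSumFinEquiv.trans (finCongr (two_mul k).symm))
    (fun i => realify (A i)) (fun j => realify (B j)) (fun i => (hA i).realify)
    (fun j => (hB j).realify) fun i j => ?_
  rw [trace_realify_mul, ← hfact, Complex.ofReal_re]

theorem hermitian_fact_to_real_fact {p q k : ℕ} (M : Matrix (Fin p) (Fin q) ℝ)
    (hM : ∀ i j, 0 ≤ M i j)
    (A : Fin p → Matrix (Fin k) (Fin k) ℂ) (B : Fin q → Matrix (Fin k) (Fin k) ℂ)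
    (hA : ∀ i, (A i).PosSemidef) (hB : ∀ j, (B j).PosSemidef)
    (hfact : ∀ i j, (M i j : ℂ) = (A i * B j).trace) :
    HasPsdFact M (2 * k) ∧
    (∀ (n : ℕ) (C : Matrix (Fin n) (Fin n) ℂ), C.PosSemidef → (realify C).PosSemidef) ∧
    (∀ (n : ℕ) (C D : Matrix (Fin n) (Fin n) ℂ), C.IsHermitian → D.IsHermitian →
      (realify C * realify D).trace = ((C * D).trace).re) :=
  hermitian_fact_to_real_fact_general M A B hA hB hfact
end

section
/- For nonnegative matrices M ∈ ℝ^{p×q} and N ∈ ℝ^{q×r}, rank_psd(MN) ≤ min(rank_psd(M), rank_psd(N)). -/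
/-!
If `M i j = tr (A i * B j)` with psd `A i`, `B j`, then
`(M * N) i l = tr (A i * ∑ j, N j l • B j)`, and a nonnegative combination of psd matrices is
psd; symmetrically on the other side. So every psd factorization of `M` or of `N` yields one of
`M * N` of the same size. Nonnegative matrices have the diagonal factorization, so their psd
rank is attained (rather than being the junk value `sInf ∅ = 0`).
-/

open Matrix

section

variable {m n o : Type*} {k : ℕ}

theorem Matrix.posSemidef_sum_smul {d : Type*} [Fintype n] {A : n → Matrix d d ℝ}
    (hA : ∀ j, (A j).PosSemidef) {c : n → ℝ} (hc : ∀ j, 0 ≤ c j) :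
    (∑ j, c j • A j).PosSemidef :=
  posSemidef_sum _ fun j _ => (hA j).smul (hc j)

theorem HasPsdFact.of_nonneg {q : ℕ} {M : Matrix m (Fin q) ℝ} (hM : ∀ i j, 0 ≤ M i j) :
    HasPsdFact M q := by
  refine ⟨fun i => diagonal (M i), fun j => diagonal (Pi.single j 1),
    fun i => .diagonal (hM i), fun j => .diagonal fun s => ?_, fun i j => ?_⟩
  · by_cases h : s = j <;> simp [h]
  · simp [trace_diagonal, Pi.single_apply]

theorem HasPsdFact.mul_of_nonneg [Fintype n] {M : Matrix m n ℝ} {N : Matrix n o ℝ}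
    (h : HasPsdFact M k) (hN : ∀ j l, 0 ≤ N j l) : HasPsdFact (M * N) k := by
  obtain ⟨A, B, hA, hB, hMAB⟩ := h
  refine ⟨A, fun l => ∑ j, N j l • B j, hA, fun l => posSemidef_sum_smul hB (hN · l),
    fun i l => ?_⟩
  simp only [mul_apply, hMAB, Matrix.mul_sum, Matrix.mul_smul, trace_sum, trace_smul,
    smul_eq_mul, mul_comm]

theorem HasPsdFact.nonneg_mul [Fintype n] {M : Matrix m n ℝ} {N : Matrix n o ℝ}
    (hM : ∀ i j, 0 ≤ M i j) (h : HasPsdFact N k) : HasPsdFact (M * N) k := by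
  obtain ⟨A, B, hA, hB, hNAB⟩ := h
  refine ⟨fun i => ∑ j, M i j • A j, B, fun i => posSemidef_sum_smul hA (hM i), hB,
    fun i l => ?_⟩
  simp only [mul_apply, hNAB, Matrix.sum_mul, Matrix.smul_mul, trace_sum, trace_smul,
    smul_eq_mul]

theorem psdRank_le {M : Matrix m n ℝ} (h : HasPsdFact M k) : psdRank M ≤ k :=
  Nat.sInf_le h

theorem HasPsdFact.hasPsdFact_psdRank {M : Matrix m n ℝ} (h : HasPsdFact M k) :
    HasPsdFact M (psdRank M) :=
  Nat.sInf_mem (s := {k | HasPsdFact M k}) ⟨k, h⟩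

theorem psdRank_mul_le_left {q : ℕ} {M : Matrix m (Fin q) ℝ} {N : Matrix (Fin q) o ℝ}
    (hM : ∀ i j, 0 ≤ M i j) (hN : ∀ j l, 0 ≤ N j l) : psdRank (M * N) ≤ psdRank M :=
  psdRank_le ((HasPsdFact.of_nonneg hM).hasPsdFact_psdRank.mul_of_nonneg hN)

theorem psdRank_mul_le_right {p q : ℕ} {M : Matrix m (Fin p) ℝ} {N : Matrix (Fin p) (Fin q) ℝ}
    (hM : ∀ i j, 0 ≤ M i j) (hN : ∀ j l, 0 ≤ N j l) : psdRank (M * N) ≤ psdRank N :=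
  psdRank_le ((HasPsdFact.of_nonneg hN).hasPsdFact_psdRank.nonneg_mul hM)

end

theorem psdRank_mul_le {p q r : ℕ} (M : Matrix (Fin p) (Fin q) ℝ)
    (N : Matrix (Fin q) (Fin r) ℝ)
    (hM : ∀ i j, 0 ≤ M i j) (hN : ∀ i j, 0 ≤ N i j) :
    psdRank (M * N) ≤ min (psdRank M) (psdRank N) :=
  le_min (psdRank_mul_le_left hM hN) (psdRank_mul_le_right hM hN)
end

section
/- For any matrix M ∈ ℝ^{p×q}, the Hadamard (entrywise) square M∘M (which is nonnegative) satisfies rank_psd(M∘M) ≤ rank(M). -/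
/-!
Factor `M = U * V` through `ℝ ^ r` with `r = rank M`, so that `M i j = ⟪uᵢ, vⱼ⟫` for the rows
`uᵢ` of `U` and the columns `vⱼ` of `V`. Then `(M i j) ^ 2 = trace (uᵢ uᵢᵀ * vⱼ vⱼᵀ)`, and the
rank-one matrices `uᵢ uᵢᵀ`, `vⱼ vⱼᵀ` form a psd factorization of size `r` of `M ∘ M`.
-/

open Matrix

namespace Matrix

theorem exists_eq_mul_of_rank {m n K : Type*} [Field K] [Fintype n] (A : Matrix m n K) :
    ∃ (U : Matrix m (Fin A.rank) K) (V : Matrix (Fin A.rank) n K), A = U * V := by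
  let b : Module.Basis (Fin A.rank) K (LinearMap.range A.mulVecLin) := Module.finBasis _ _
  have hcol (j : n) : Aᵀ j ∈ LinearMap.range A.mulVecLin :=
    range_mulVecLin A ▸ Submodule.subset_span ⟨j, rfl⟩
  refine ⟨of fun i t => (b t : m → K) i, of fun t j => b.repr ⟨_, hcol j⟩ t, ?_⟩
  ext i j
  have hrepr := congr_arg (fun w : LinearMap.range A.mulVecLin => (w : m → K) i)
    (b.sum_repr ⟨_, hcol j⟩)
  simp only [Submodule.coe_sum, Submodule.coe_smul, Finset.sum_apply, Pi.smul_apply,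
    smul_eq_mul] at hrepr
  simpa only [mul_apply, of_apply, transpose_apply, mul_comm] using hrepr.symm

theorem trace_vecMulVec_mul_vecMulVec {l R : Type*} [Fintype l] [CommSemiring R]
    (u v w x : l → R) :
    (vecMulVec u v * vecMulVec w x).trace = (v ⬝ᵥ w) * (u ⬝ᵥ x) := by
  rw [vecMulVec_mul_vecMulVec, trace_vecMulVec, dotProduct_smul, smul_eq_mul]

end Matrix

theorem isPsdFact_hadamard_sq_mul {m n : Type*} {k : ℕ}
    (U : Matrix m (Fin k) ℝ) (V : Matrix (Fin k) n ℝ) :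
    IsPsdFact (of fun i j => (U * V) i j ^ 2)
      (fun i => vecMulVec (U i) (U i)) (fun j => vecMulVec (Vᵀ j) (Vᵀ j)) := by
  refine ⟨fun i => ?_, fun j => ?_, fun i j => ?_⟩
  · simpa using posSemidef_vecMulVec_self_star (U i)
  · simpa using posSemidef_vecMulVec_self_star (Vᵀ j)
  · rw [trace_vecMulVec_mul_vecMulVec, of_apply, mul_apply', sq]
    rfl

theorem psdRank_hadamard_sq_le_rank {p q : ℕ} (M : Matrix (Fin p) (Fin q) ℝ) :
    psdRank (Matrix.of fun i j => (M i j) ^ 2) ≤ M.rank := by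
  obtain ⟨U, V, hUV⟩ := M.exists_eq_mul_of_rank
  have hfact := isPsdFact_hadamard_sq_mul U V
  rw [← hUV] at hfact
  exact Nat.sInf_le ⟨_, _, hfact⟩
end

section
/- The psd rank of the n×n identity matrix equals n. More generally, the psd rank of a nonnegative diagonal matrix equals the number of its nonzero diagonal entries. -/
open Matrix

/-!
A nonnegative diagonal matrix with `r` nonzero entries factors through `r × r` diagonal
matrices. Conversely, for psd `A` and `B`, `trace (A * B) = 0` forces `A * B = 0`; so in a psd
factorization `A i * B j = 0` for `i ≠ j` while `A i * B i ≠ 0` whenever `d i ≠ 0`. Choosing `w i`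
with `A i * B i * w i ≠ 0`, the vectors `B i * w i` are linearly independent in `ℝᵏ`, since `A i`
kills all of them but the `i`-th, hence `r ≤ k`.
-/

open scoped ComplexOrder in
/-- Writing `A = Cᴴ C` and `B = Dᴴ D`, the trace of `A * B` is the squared Frobenius norm of
`C * Dᴴ`, so it vanishes only if `C * Dᴴ = 0`, and then `A * B = Cᴴ (C Dᴴ) D = 0`. -/
theorem Matrix.PosSemidef.mul_eq_zero_of_trace_mul_eq_zero {n 𝕜 : Type*} [Fintype n]
    [DecidableEq n] [RCLike 𝕜] {A B : Matrix n n 𝕜} (hA : A.PosSemidef) (hB : B.PosSemidef)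
    (h : (A * B).trace = 0) : A * B = 0 := by
  open scoped MatrixOrder in
  obtain ⟨C, rfl⟩ := CStarAlgebra.nonneg_iff_eq_star_mul_self.mp hA.nonneg
  open scoped MatrixOrder in
  obtain ⟨D, rfl⟩ := CStarAlgebra.nonneg_iff_eq_star_mul_self.mp hB.nonneg
  rw [star_eq_conjTranspose, star_eq_conjTranspose] at h ⊢
  have hCD : C * Dᴴ = 0 := by
    rw [← trace_mul_conjTranspose_self_eq_zero_iff, ← h, conjTranspose_mul,
      conjTranspose_conjTranspose, ← mul_assoc, trace_mul_comm]
    simp only [mul_assoc]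
  rw [mul_assoc, ← mul_assoc C, hCD, zero_mul, mul_zero]

theorem LinearIndependent.of_pairwise_map_eq_zero {ι R M N : Type*} [Ring R] [AddCommGroup M]
    [Module R M] [AddCommGroup N] [Module R N] [IsDomain R] [Module.IsTorsionFree R N]
    (v : ι → M) (f : ι → M →ₗ[R] N)
    (h0 : Pairwise fun i j ↦ f i (v j) = 0) (hne : ∀ i, f i (v i) ≠ 0) :
    LinearIndependent R v := by
  refine linearIndependent_iff'.mpr fun s g hrel i hi ↦ ?_
  have hsum : ∑ j ∈ s, g j • f i (v j) = g i • f i (v i) :=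
    s.sum_eq_single i (fun j _ hji ↦ by rw [h0 hji.symm, smul_zero]) (by simp [hi])
  have : g i • f i (v i) = 0 := by
    simpa [map_sum, hsum] using congr_arg (f i) hrel
  exact (smul_eq_zero.mp this).resolve_right (hne i)

section Diagonal

variable {ι : Type*} [DecidableEq ι]

theorem hasPsdFact_diagonal_of_injective {d : ι → ℝ} (hd : ∀ i, 0 ≤ d i) {k : ℕ}
    {g : Fin k → ι} (hg : Function.Injective g) (hsupp : ∀ i, d i ≠ 0 → i ∈ Set.range g) :
    HasPsdFact (diagonal d) k := by
  let P : ι → Matrix (Fin k) (Fin k) ℝ := fun j ↦ diagonal fun t ↦ if g t = j then 1 else 0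
  have hP : ∀ j, (P j).PosSemidef := fun j ↦
    posSemidef_diagonal_iff.mpr fun t ↦ by split_ifs <;> norm_num
  refine ⟨fun i ↦ d i • P i, P, fun i ↦ (hP i).smul (hd i), hP, fun i j ↦ ?_⟩
  rw [smul_mul, trace_smul, diagonal_mul_diagonal, trace_diagonal, smul_eq_mul]
  rcases eq_or_ne i j with rfl | hij
  · rcases eq_or_ne (d i) 0 with hdi | hdi
    · rw [diagonal_apply_eq, hdi, zero_mul]
    · obtain ⟨t₀, rfl⟩ := hsupp i hdi
      simp [hg.eq_iff]
  · rw [diagonal_apply_ne _ hij, Finset.sum_eq_zero, mul_zero]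
    intro t _
    split_ifs with hi hj <;> simp_all

theorem card_support_le_of_hasPsdFact_diagonal [Fintype ι] {d : ι → ℝ} {k : ℕ}
    (h : HasPsdFact (diagonal d) k) : (Finset.univ.filter fun i ↦ d i ≠ 0).card ≤ k := by
  obtain ⟨A, B, hA, hB, hAB⟩ := h
  have hoff : ∀ i j, i ≠ j → A i * B j = 0 := fun i j hij ↦
    (hA i).mul_eq_zero_of_trace_mul_eq_zero (hB j) (by rw [← hAB, diagonal_apply_ne _ hij])
  have hon : ∀ s : {i // d i ≠ 0}, ∃ w, (A s * B s) *ᵥ w ≠ 0 := by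
    intro s
    by_contra! hzero
    have : A s * B s = 0 := ext_iff_mulVec.mpr fun v ↦ by rw [hzero v, zero_mulVec]
    exact s.2 (by rw [← diagonal_apply_eq d, hAB, this, trace_zero])
  choose w hw using hon
  have hli : LinearIndependent ℝ fun s : {i // d i ≠ 0} ↦ B s *ᵥ w s := by
    refine .of_pairwise_map_eq_zero _ (fun s ↦ (A s).mulVecLin) (fun s t hst ↦ ?_) fun s ↦ ?_
    · simp [mulVec_mulVec, hoff s t (Subtype.coe_ne_coe.mpr hst)]
    · simpa [mulVec_mulVec] using hw s
  simpa [Fintype.card_subtype] using hli.fintype_card_le_finrank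

theorem psdRank_diagonal [Fintype ι] {d : ι → ℝ} (hd : ∀ i, 0 ≤ d i) :
    psdRank (diagonal d) = (Finset.univ.filter fun i ↦ d i ≠ 0).card := by
  set S := Finset.univ.filter fun i ↦ d i ≠ 0
  have hS : HasPsdFact (diagonal d) S.card := by
    refine hasPsdFact_diagonal_of_injective hd (g := fun t ↦ (S.equivFin.symm t : ι))
      (Subtype.val_injective.comp S.equivFin.symm.injective) fun i hi ↦ ?_
    exact ⟨S.equivFin ⟨i, by simpa [S] using hi⟩, by simp⟩
  exact le_antisymm (Nat.sInf_le hS)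
    (le_csInf ⟨_, hS⟩ fun k hk ↦ card_support_le_of_hasPsdFact_diagonal hk)

end Diagonal

theorem psdRank_identity_and_diagonal (n : ℕ) :
    psdRank (1 : Matrix (Fin n) (Fin n) ℝ) = n ∧
    ∀ d : Fin n → ℝ, (∀ i, 0 ≤ d i) →
      psdRank (Matrix.diagonal d) = (Finset.univ.filter fun i => d i ≠ 0).card := by
  refine ⟨?_, fun d hd ↦ psdRank_diagonal hd⟩
  rw [← diagonal_one, psdRank_diagonal fun _ ↦ zero_le_one]
  simp
end

section
/- If a nonnegative matrix M ∈ ℝ^{p×q} admits a psd factorization of size k, then it admits a psd factorization M_{ij} = trace(A_i B_j) of size k in which trace(A_i) ≤ k for all i and trace(B_j) = Σ_{i=1}^p M_{ij} for all j. (One may assume WLOG that Σ_i A_i is invertible, or prove the statement under that assumption.) -/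
open Matrix

/-!
Write `S = ∑ i, A i` as `Yᴴ * Y` with `Y = S^{1/2}`, and let `X = S^{-1/2}` be computed in an
eigenbasis of `S` with `0⁻¹ = 0`, so that `Y * X * Y = Y`. Since every `A i` lies below `S`, it
vanishes on `ker S`, hence is fixed by the orthogonal projection `X * Y` onto the range of `S`; so
`Xᴴ * A i * X`, `Y * B j * Yᴴ` is still a psd factorization of `M`. The new left factors sum to that
projection, whose trace is at most `k`, and `trace (Y * B j * Yᴴ) = trace (S * B j) = ∑ i, M i j`.
-/

namespace Matrix

theorem trace_conjStarAlgAut {n R : Type*} [Fintype n] [DecidableEq n] [CommSemiring R]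
    [StarRing R] (U : unitary (Matrix n n R)) (Z : Matrix n n R) :
    (Unitary.conjStarAlgAut R _ U Z).trace = Z.trace := by
  rw [Unitary.conjStarAlgAut_apply, trace_mul_cycle, Unitary.coe_star_mul_self, one_mul]

namespace PosSemidef

open scoped ComplexOrder

variable {ι n 𝕜 : Type*} [Fintype ι] [Fintype n] [RCLike 𝕜] {A : ι → Matrix n n 𝕜}

theorem mulVec_eq_zero_of_sum_mulVec_eq_zero (hA : ∀ i, (A i).PosSemidef) {v : n → 𝕜}
    (hv : (∑ i, A i) *ᵥ v = 0) (i : ι) : A i *ᵥ v = 0 := by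
  have hsum : ∑ j, star v ⬝ᵥ A j *ᵥ v = 0 := by
    simpa [sum_mulVec, dotProduct_sum] using congrArg (star v ⬝ᵥ ·) hv
  refine ((hA i).dotProduct_mulVec_zero_iff v).mp ?_
  exact (Finset.sum_eq_zero_iff_of_nonneg fun j _ => (hA j).dotProduct_mulVec_nonneg v).mp hsum i
    (Finset.mem_univ i)

theorem mul_eq_zero_of_sum_mul_eq_zero {m : Type*} [Fintype m] (hA : ∀ i, (A i).PosSemidef)
    {N : Matrix n m 𝕜} (hN : (∑ i, A i) * N = 0) (i : ι) : A i * N = 0 := by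
  refine ext_iff_mulVec.mpr fun v => ?_
  have hv : (∑ i, A i) *ᵥ (N *ᵥ v) = 0 := by rw [mulVec_mulVec, hN, zero_mulVec]
  rw [zero_mulVec, ← mulVec_mulVec, mulVec_eq_zero_of_sum_mulVec_eq_zero hA hv i]

theorem conjTranspose_mul_mul_eq_self_of_inner_inverse [DecidableEq n]
    (hA : ∀ i, (A i).PosSemidef) {X Y : Matrix n n 𝕜}
    (hY : Yᴴ * Y = ∑ i, A i) (hXY : Y * X * Y = Y) (i : ι) :
    (X * Y)ᴴ * A i * (X * Y) = A i := by
  have hker : (∑ i, A i) * (1 - X * Y) = 0 := by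
    rw [← hY, mul_sub, mul_one, mul_assoc, ← mul_assoc Y, hXY, sub_self]
  have hfix : A i * (X * Y) = A i := by
    have := mul_eq_zero_of_sum_mul_eq_zero hA hker i
    rwa [mul_sub, mul_one, sub_eq_zero, eq_comm] at this
  calc (X * Y)ᴴ * A i * (X * Y) = (X * Y)ᴴ * A i := by rw [mul_assoc, hfix]
    _ = (A i * (X * Y))ᴴ := by rw [conjTranspose_mul (A i), (hA i).isHermitian.eq]
    _ = A i := by rw [hfix, (hA i).isHermitian.eq]

end PosSemidef

theorem PosSemidef.exists_conjTranspose_mul_self_eq_and_inner_inverse {n : Type*} [Fintype n]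
    [DecidableEq n] {S : Matrix n n ℝ} (hS : S.PosSemidef) :
    ∃ X Y : Matrix n n ℝ, Yᴴ * Y = S ∧ Y * X * Y = Y ∧ (Xᴴ * S * X).trace ≤ Fintype.card n := by
  set c := Unitary.conjStarAlgAut ℝ _ hS.1.eigenvectorUnitary
  set d : n → ℝ := fun l => √(hS.1.eigenvalues l)
  have hS' : S = c (diagonal (d * d)) := by
    rw [show d * d = hS.1.eigenvalues from
      funext fun l => Real.mul_self_sqrt (hS.eigenvalues_nonneg l)]
    exact hS.1.spectral_theorem
  have hc_conjTranspose (e : n → ℝ) : (c (diagonal e))ᴴ = c (diagonal e) := by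
    rw [← star_eq_conjTranspose, ← map_star, star_eq_conjTranspose, diagonal_conjTranspose,
      star_trivial]
  refine ⟨c (diagonal d⁻¹), c (diagonal d), ?_, ?_, ?_⟩
  · rw [hc_conjTranspose, ← map_mul, diagonal_mul_diagonal, hS']
    rfl
  · rw [← map_mul, ← map_mul, diagonal_mul_diagonal, diagonal_mul_diagonal]
    exact congrArg (c ∘ diagonal) (funext fun l => mul_inv_mul_cancel (d l))
  · rw [hc_conjTranspose, hS', ← map_mul, ← map_mul, diagonal_mul_diagonal, diagonal_mul_diagonal,
      trace_conjStarAlgAut, trace_diagonal]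
    calc ∑ l, d⁻¹ l * (d * d) l * d⁻¹ l ≤ ∑ _l : n, (1 : ℝ) := by
          gcongr with l
          simp only [Pi.mul_apply, Pi.inv_apply]
          rcases eq_or_ne (d l) 0 with h | h
          · simp [h]
          · rw [inv_mul_cancel_left₀ h, mul_inv_cancel₀ h]
      _ = Fintype.card n := by simp

end Matrix

namespace IsPsdFact

variable {m n : Type*} {k : ℕ} {M : Matrix m n ℝ} {A : m → Matrix (Fin k) (Fin k) ℝ}
  {B : n → Matrix (Fin k) (Fin k) ℝ}

theorem conj (h : IsPsdFact M A B) {X Y : Matrix (Fin k) (Fin k) ℝ}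
    (hXY : ∀ i, (X * Y)ᴴ * A i * (X * Y) = A i) :
    IsPsdFact M (fun i => Xᴴ * A i * X) (fun j => Y * B j * Yᴴ) := by
  refine ⟨fun i => (h.1 i).conjTranspose_mul_mul_same X,
    fun j => (h.2.1 j).mul_mul_conjTranspose_same Y, fun i j => ?_⟩
  rw [h.2.2 i j, ← hXY i, conjTranspose_mul]
  simp only [Matrix.mul_assoc]
  rw [trace_mul_comm Yᴴ]
  simp only [Matrix.mul_assoc]

theorem trace_sum_mul [Fintype m] (h : IsPsdFact M A B) (j : n) :
    ((∑ i, A i) * B j).trace = ∑ i, M i j := by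
  simp only [Finset.sum_mul, trace_sum, h.2.2]

end IsPsdFact

theorem psdFact_rescaled_general {p q k : ℕ} (M : Matrix (Fin p) (Fin q) ℝ)
    (h : HasPsdFact M k) :
    ∃ (A : Fin p → Matrix (Fin k) (Fin k) ℝ) (B : Fin q → Matrix (Fin k) (Fin k) ℝ),
      IsPsdFact M A B ∧ (∀ i, (A i).trace ≤ k) ∧ ∀ j, (B j).trace = ∑ i, M i j := by
  obtain ⟨A, B, hAB⟩ := h
  obtain ⟨X, Y, hY, hXY, htrace⟩ := (posSemidef_sum Finset.univ fun i _ => hAB.1 i)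
    |>.exists_conjTranspose_mul_self_eq_and_inner_inverse
  have hfact := hAB.conj (PosSemidef.conjTranspose_mul_mul_eq_self_of_inner_inverse hAB.1 hY hXY)
  refine ⟨_, _, hfact, fun i => ?_, fun j => ?_⟩
  · calc (Xᴴ * A i * X).trace ≤ ∑ i, (Xᴴ * A i * X).trace :=
          Finset.single_le_sum (fun i _ => (hfact.1 i).trace_nonneg) (Finset.mem_univ i)
      _ = (Xᴴ * (∑ i, A i) * X).trace := by simp only [Finset.mul_sum, Finset.sum_mul, trace_sum]
      _ ≤ k := by simpa using htrace
  · rw [trace_mul_cycle, hY, hAB.trace_sum_mul]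

theorem psdFact_rescaled {p q k : ℕ} (M : Matrix (Fin p) (Fin q) ℝ)
    (hM : ∀ i j, 0 ≤ M i j) (h : HasPsdFact M k) :
    ∃ (A : Fin p → Matrix (Fin k) (Fin k) ℝ) (B : Fin q → Matrix (Fin k) (Fin k) ℝ),
      IsPsdFact M A B ∧ (∀ i, (A i).trace ≤ k) ∧ ∀ j, (B j).trace = ∑ i, M i j :=
  psdFact_rescaled_general M h
end

section
/- The set of nonnegative p×q matrices of psd rank at most k is closed: if (Mⁿ) is a sequence of nonnegative matrices converging to M with rank_psd(Mⁿ) ≤ k for all n, then rank_psd(M) ≤ k. -/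
open Matrix

/-! Conjugating a psd factorization, `A i ↦ Pᴴ * A i * P` and `B j ↦ Q * B j * Qᴴ` with
`P * Q = 1`, gives another psd factorization of the same matrix. Choosing
`Qᴴ * Q = ∑ i, A i + ε • 1` normalizes it so that `∑ i, trace (A i) ≤ k` and
`trace (B j) ≤ ∑ i, M i j + ε * trace (B j)`. Psd matrices of bounded trace form a compact set,
so for any bounds on the column sums the matrices admitting a normalized factorization form a
continuous image of a compact set, hence a closed set. It contains `Mseq n` for all large `n`,
and therefore `M`. -/

open Filter Topology

namespace Matrix

open scoped ComplexOrder

variable {ι : Type*} [Fintype ι]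

namespace PosSemidef

lemma two_mul_abs_apply_le [DecidableEq ι] {A : Matrix ι ι ℝ} (hA : A.PosSemidef) (a b : ι) :
    2 * |A a b| ≤ A a a + A b b := by
  have hsymm : A b a = A a b := by simpa using (congrFun (congrFun hA.isHermitian b) a).symm
  have hplus := hA.dotProduct_mulVec_nonneg (Pi.single a 1 + Pi.single b 1)
  have hminus := hA.dotProduct_mulVec_nonneg (Pi.single a 1 - Pi.single b 1)
  simp only [star_trivial, mulVec_add, mulVec_sub, mulVec_single, dotProduct_add, dotProduct_sub,
    add_dotProduct, sub_dotProduct, single_dotProduct, MulOpposite.op_one, col_apply, one_smul,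
    one_mul] at hplus hminus
  rcases abs_cases (A a b) with ⟨habs, -⟩ | ⟨habs, -⟩ <;> rw [habs] <;> linarith

lemma diag_le_trace {A : Matrix ι ι ℝ} (hA : A.PosSemidef) (a : ι) : A a a ≤ A.trace :=
  Finset.single_le_sum (f := fun i => A i i) (fun _ _ => hA.diag_nonneg) (Finset.mem_univ a)

lemma abs_apply_le_trace {A : Matrix ι ι ℝ} (hA : A.PosSemidef) (a b : ι) :
    |A a b| ≤ A.trace := by
  classical
  linarith [hA.two_mul_abs_apply_le a b, hA.diag_le_trace a, hA.diag_le_trace b]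

end PosSemidef

open scoped MatrixOrder in
lemma PosDef.exists_isUnit_conjTranspose_mul_self_eq {𝕜 : Type*} [RCLike 𝕜] [DecidableEq ι]
    {S : Matrix ι ι 𝕜} (hS : S.PosDef) :
    ∃ Q : Matrix ι ι 𝕜, IsUnit Q ∧ Qᴴ * Q = S := by
  have hT : (CFC.sqrt S).PosSemidef := (CFC.sqrt_nonneg S).posSemidef
  have hTT : CFC.sqrt S * CFC.sqrt S = S := CFC.sqrt_mul_sqrt_self S hS.posSemidef.nonneg
  exact ⟨CFC.sqrt S, isUnit_of_mul_isUnit_left (hTT.symm ▸ hS.isUnit),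
    by rw [hT.isHermitian.eq, hTT]⟩

lemma isClosed_setOf_posSemidef {𝕜 : Type*} [RCLike 𝕜] :
    IsClosed {A : Matrix ι ι 𝕜 | A.PosSemidef} := by
  have hset : {A : Matrix ι ι 𝕜 | A.PosSemidef} =
      {A | Aᴴ = A} ∩ ⋂ x : ι → 𝕜, {A | 0 ≤ star x ⬝ᵥ A *ᵥ x} := by
    ext A
    simp [posSemidef_iff_dotProduct_mulVec, IsHermitian]
  rw [hset]
  refine (isClosed_eq continuous_id.matrix_conjTranspose continuous_id).inter
    (isClosed_iInter fun x => isClosed_le continuous_const ?_)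
  exact continuous_const.dotProduct (continuous_id.matrix_mulVec continuous_const)

lemma isCompact_setOf_posSemidef_trace_le (c : ℝ) :
    IsCompact {A : Matrix ι ι ℝ | A.PosSemidef ∧ A.trace ≤ c} := by
  have hbox : IsCompact (Set.univ.pi fun _ : ι => Set.univ.pi fun _ : ι => Set.Icc (-c) c) :=
    isCompact_univ_pi fun _ => isCompact_univ_pi fun _ => isCompact_Icc
  refine hbox.of_isClosed_subset
    (isClosed_setOf_posSemidef.inter
      (isClosed_le (continuous_id (X := Matrix ι ι ℝ)).matrix_trace continuous_const))
    fun A ⟨hA, hc⟩ a _ b _ => abs_le.1 ((hA.abs_apply_le_trace a b).trans hc)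

end Matrix

section Factorization

variable {m n : Type*} {k : ℕ} {M : Matrix m n ℝ}
  {A : m → Matrix (Fin k) (Fin k) ℝ} {B : n → Matrix (Fin k) (Fin k) ℝ}

lemma IsPsdFact.conj_s15 (h : IsPsdFact M A B) {P Q : Matrix (Fin k) (Fin k) ℝ} (hPQ : P * Q = 1) :
    IsPsdFact M (fun i => Pᴴ * A i * P) (fun j => Q * B j * Qᴴ) := by
  obtain ⟨hA, hB, hM⟩ := h
  refine ⟨fun i => (hA i).conjTranspose_mul_mul_same P,
    fun j => (hB j).mul_mul_conjTranspose_same Q, fun i j => ?_⟩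
  calc M i j = (A i * B j * (P * Q)ᴴ).trace := by
        rw [hPQ, conjTranspose_one, Matrix.mul_one, hM]
    _ = (Pᴴ * (A i * B j * Qᴴ)).trace := by
        rw [conjTranspose_mul, ← Matrix.mul_assoc, trace_mul_comm]
    _ = (Pᴴ * A i * P * (Q * B j * Qᴴ)).trace := by
        simp only [Matrix.mul_assoc, ← Matrix.mul_assoc P Q, hPQ, Matrix.one_mul]

lemma IsPsdFact.exists_trace_le [Fintype m] [Fintype n] (h : IsPsdFact M A B) :
    ∃ (A' : m → Matrix (Fin k) (Fin k) ℝ) (B' : n → Matrix (Fin k) (Fin k) ℝ),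
      IsPsdFact M A' B' ∧ (∀ i, (A' i).trace ≤ k) ∧ ∀ j, (B' j).trace ≤ ∑ i, M i j + 1 := by
  obtain ⟨hA, hB, hM⟩ := h
  set ε : ℝ := (1 + ∑ j, (B j).trace)⁻¹
  have hBtr : 0 ≤ ∑ j, (B j).trace := Finset.sum_nonneg fun j _ => (hB j).trace_nonneg
  have hε : 0 < ε := inv_pos.2 (by linarith)
  have hεB (j : n) : ε * (B j).trace ≤ 1 := by
    rw [inv_mul_le_iff₀ (inv_pos.1 hε), mul_one]
    linarith [Finset.single_le_sum (fun j _ => (hB j).trace_nonneg) (Finset.mem_univ j)]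
  set S : Matrix (Fin k) (Fin k) ℝ := ∑ i, A i + ε • 1
  have hS : S.PosDef :=
    PosDef.posSemidef_add (posSemidef_sum _ fun i _ => hA i) (PosDef.one.smul hε)
  obtain ⟨Q, hQ, hQS⟩ := hS.exists_isUnit_conjTranspose_mul_self_eq
  set P := Q⁻¹
  have hPQ : P * Q = 1 := nonsing_inv_mul Q ((isUnit_iff_isUnit_det Q).1 hQ)
  have hPSP : Pᴴ * S * P = 1 := by
    rw [← hQS, ← Matrix.mul_assoc, ← conjTranspose_mul, Matrix.mul_assoc, mul_eq_one_comm.1 hPQ,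
      conjTranspose_one, Matrix.one_mul]
  refine ⟨_, _, IsPsdFact.conj_s15 ⟨hA, hB, hM⟩ hPQ, fun i => ?_, fun j => ?_⟩
  · calc (Pᴴ * A i * P).trace ≤ ∑ i', (Pᴴ * A i' * P).trace :=
          Finset.single_le_sum (fun i' _ => ((hA i').conjTranspose_mul_mul_same P).trace_nonneg)
            (Finset.mem_univ i)
      _ = (Pᴴ * S * P).trace - ε * (Pᴴ * P).trace := by
          simp [S, Matrix.mul_add, Matrix.add_mul, Finset.mul_sum, Finset.sum_mul, trace_sum]
      _ ≤ k := by
          rw [hPSP, trace_one, Fintype.card_fin]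
          nlinarith [(posSemidef_conjTranspose_mul_self P).trace_nonneg]
  · calc (Q * B j * Qᴴ).trace = (B j * S).trace := by
          rw [Matrix.mul_assoc, trace_mul_comm, Matrix.mul_assoc, hQS]
      _ = ∑ i, M i j + ε * (B j).trace := by
          simp only [S, Matrix.mul_add, Finset.mul_sum, trace_add, trace_sum, Matrix.mul_smul,
            Matrix.mul_one, trace_smul, smul_eq_mul, hM, trace_mul_comm (B j)]
      _ ≤ ∑ i, M i j + 1 := by linarith [hεB j]

end Factorization

lemma isClosed_setOf_isPsdFact_trace_le {m n : Type*} (k : ℕ) (a : m → ℝ) (b : n → ℝ) :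
    IsClosed {M : Matrix m n ℝ | ∃ (A : m → Matrix (Fin k) (Fin k) ℝ)
      (B : n → Matrix (Fin k) (Fin k) ℝ),
        IsPsdFact M A B ∧ (∀ i, (A i).trace ≤ a i) ∧ ∀ j, (B j).trace ≤ b j} := by
  set K :=
    (Set.univ.pi fun i => {X : Matrix (Fin k) (Fin k) ℝ | X.PosSemidef ∧ X.trace ≤ a i}) ×ˢ
      (Set.univ.pi fun j => {X : Matrix (Fin k) (Fin k) ℝ | X.PosSemidef ∧ X.trace ≤ b j})
  have hK : IsCompact K :=
    (isCompact_univ_pi fun _ => isCompact_setOf_posSemidef_trace_le _).prod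
      (isCompact_univ_pi fun _ => isCompact_setOf_posSemidef_trace_le _)
  have hcont : Continuous fun AB : (m → Matrix (Fin k) (Fin k) ℝ) ×
      (n → Matrix (Fin k) (Fin k) ℝ) =>
      (Matrix.of fun i j => (AB.1 i * AB.2 j).trace : Matrix m n ℝ) :=
    continuous_pi fun i => continuous_pi fun j => by
      simp only [of_apply]
      exact (((continuous_apply i).comp continuous_fst).matrix_mul
        ((continuous_apply j).comp continuous_snd)).matrix_trace
  convert (hK.image hcont).isClosed using 1
  ext M
  constructor
  · rintro ⟨A, B, ⟨hA, hB, hM⟩, ha, hb⟩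
    exact ⟨(A, B), ⟨fun i _ => ⟨hA i, ha i⟩, fun j _ => ⟨hB j, hb j⟩⟩,
      by ext i j; exact (hM i j).symm⟩
  · rintro ⟨⟨A, B⟩, ⟨hA, hB⟩, rfl⟩
    exact ⟨A, B, ⟨fun i => (hA i trivial).1, fun j => (hB j trivial).1, fun i j => rfl⟩,
      fun i => (hA i trivial).2, fun j => (hB j trivial).2⟩

theorem psdRank_le_of_tendsto_general {p q k : ℕ}
    (Mseq : ℕ → Matrix (Fin p) (Fin q) ℝ) (M : Matrix (Fin p) (Fin q) ℝ)
    (hfact : ∀ n, HasPsdFact (Mseq n) k)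
    (hlim : Filter.Tendsto Mseq Filter.atTop (nhds M)) :
    HasPsdFact M k := by
  have hcol (j : Fin q) : Tendsto (fun n => ∑ i, Mseq n i j) atTop (𝓝 (∑ i, M i j)) :=
    tendsto_finsetSum _ fun i _ => tendsto_pi_nhds.1 (tendsto_pi_nhds.1 hlim i) j
  have hbound : ∀ᶠ n in atTop, ∀ j, ∑ i, Mseq n i j + 1 ≤ ∑ i, M i j + 2 :=
    eventually_all.2 fun j => ((hcol j).eventually (gt_mem_nhds (lt_add_one _))).mono
      fun n hn => by linarith
  obtain ⟨A, B, hAB, -⟩ := (isClosed_setOf_isPsdFact_trace_le k (fun _ => k)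
    fun j => ∑ i, M i j + 2).mem_of_tendsto hlim <| hbound.mono fun n hn => by
      obtain ⟨A, B, hAB⟩ := hfact n
      obtain ⟨A', B', hAB', hA', hB'⟩ := hAB.exists_trace_le
      exact ⟨A', B', hAB', hA', fun j => (hB' j).trans (hn j)⟩
  exact ⟨A, B, hAB⟩

theorem psdRank_le_of_tendsto {p q k : ℕ}
    (Mseq : ℕ → Matrix (Fin p) (Fin q) ℝ) (M : Matrix (Fin p) (Fin q) ℝ)
    (hseq : ∀ n i j, 0 ≤ Mseq n i j)
    (hfact : ∀ n, HasPsdFact (Mseq n) k)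
    (hlim : Filter.Tendsto Mseq Filter.atTop (nhds M)) :
    HasPsdFact M k :=
  psdRank_le_of_tendsto_general Mseq M hfact hlim
end

section
/- For any nonnegative matrix M, rank_psd(M) ≤ rank_√(M): if N is a matrix with N_{ij}² = M_{ij} for all i,j and rank(N) = r, then M admits a psd factorization of size r using rank-one psd factors. In particular, for a 0/1 matrix M, rank_psd(M) ≤ rank(M). -/
open Matrix

/-
Factor a Hadamard square root `N` of rank `r` as `N i j = v i ⬝ᵥ w j` with `v i, w j ∈ ℝ^r`.
Then `M i j = (v i ⬝ᵥ w j)² = trace (v i v iᵀ * w j w jᵀ)`, and the rank-one matrices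
`v i v iᵀ`, `w j w jᵀ` are psd. A 0/1 matrix is its own Hadamard square root.
-/

namespace Matrix

theorem exists_dotProduct_eq_of_rank_eq {m n K : Type*} [Fintype n] [Field K]
    {N : Matrix m n K} {r : ℕ} (hr : N.rank = r) :
    ∃ (v : m → Fin r → K) (w : n → Fin r → K), ∀ i j, N i j = v i ⬝ᵥ w j := by
  set S := Submodule.span K (Set.range N.col)
  have : FiniteDimensional K S := FiniteDimensional.span_of_finite K (Set.finite_range _)
  let b : Module.Basis (Fin r) K S :=
    Module.finBasisOfFinrankEq K S ((rank_eq_finrank_span_cols N).symm.trans hr)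
  have hcol : ∀ j, N.col j ∈ S := fun j => Submodule.subset_span ⟨j, rfl⟩
  refine ⟨fun i k => (b k : m → K) i, fun j => b.repr ⟨N.col j, hcol j⟩, fun i j => ?_⟩
  have hsum := congrArg (fun x : S => (x : m → K) i) (b.sum_repr ⟨N.col j, hcol j⟩)
  simp only [Submodule.coe_sum, Submodule.coe_smul, Finset.sum_apply, Pi.smul_apply,
    smul_eq_mul] at hsum
  rw [← col_apply N j i, ← hsum, dotProduct]
  exact Finset.sum_congr rfl fun k _ => mul_comm _ _

theorem trace_vecMulVec_mul_vecMulVec_s16 {n R : Type*} [Fintype n] [CommSemiring R]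
    (a b c d : n → R) :
    (vecMulVec a b * vecMulVec c d).trace = (b ⬝ᵥ c) * (a ⬝ᵥ d) := by
  rw [vecMulVec_mul_vecMulVec, trace_vecMulVec, dotProduct_smul, smul_eq_mul]

end Matrix

theorem isPsdFact_vecMulVec_self {m n : Type*} {k : ℕ} {M : Matrix m n ℝ}
    (v : m → Fin k → ℝ) (w : n → Fin k → ℝ) (h : ∀ i j, M i j = (v i ⬝ᵥ w j) ^ 2) :
    IsPsdFact M (fun i => vecMulVec (v i) (v i)) (fun j => vecMulVec (w j) (w j)) := by
  refine ⟨fun i => ?_, fun j => ?_, fun i j => ?_⟩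
  · simpa using posSemidef_vecMulVec_self_star (v i)
  · simpa using posSemidef_vecMulVec_self_star (w j)
  · rw [h, trace_vecMulVec_mul_vecMulVec_s16, dotProduct_comm (v i), sq]

theorem exists_isPsdFact_vecMulVec_of_sq_eq {m n : Type*} [Fintype n] {r : ℕ}
    {M N : Matrix m n ℝ} (hN : ∀ i j, N i j ^ 2 = M i j) (hr : N.rank = r) :
    ∃ (v : m → Fin r → ℝ) (w : n → Fin r → ℝ),
      IsPsdFact M (fun i => vecMulVec (v i) (v i)) (fun j => vecMulVec (w j) (w j)) := by
  obtain ⟨v, w, hvw⟩ := exists_dotProduct_eq_of_rank_eq hr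
  exact ⟨v, w, isPsdFact_vecMulVec_self v w fun i j => by rw [← hN, hvw]⟩

theorem psdRank_le_rank_of_sq_eq {m n : Type*} [Fintype n] {M N : Matrix m n ℝ}
    (hN : ∀ i j, N i j ^ 2 = M i j) : psdRank M ≤ N.rank := by
  obtain ⟨v, w, hfact⟩ := exists_isPsdFact_vecMulVec_of_sq_eq hN rfl
  exact Nat.sInf_le ⟨_, _, hfact⟩

theorem psdRank_le_sqrtRank_general {p q r : ℕ} (M N : Matrix (Fin p) (Fin q) ℝ)
    (hN : ∀ i j, (N i j) ^ 2 = M i j) (hr : N.rank = r) :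
    (∃ (v : Fin p → Fin r → ℝ) (w : Fin q → Fin r → ℝ),
      IsPsdFact M (fun i => Matrix.vecMulVec (v i) (v i))
        (fun j => Matrix.vecMulVec (w j) (w j))) ∧
    ∀ (p' q' : ℕ) (M' : Matrix (Fin p') (Fin q') ℝ),
      (∀ i j, M' i j = 0 ∨ M' i j = 1) → psdRank M' ≤ M'.rank := by
  refine ⟨exists_isPsdFact_vecMulVec_of_sq_eq hN hr, fun p' q' M' h01 => ?_⟩
  refine psdRank_le_rank_of_sq_eq fun i j => ?_
  rcases h01 i j with h | h <;> simp [h]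

theorem psdRank_le_sqrtRank {p q r : ℕ} (M N : Matrix (Fin p) (Fin q) ℝ)
    (hM : ∀ i j, 0 ≤ M i j) (hN : ∀ i j, (N i j) ^ 2 = M i j) (hr : N.rank = r) :
    (∃ (v : Fin p → Fin r → ℝ) (w : Fin q → Fin r → ℝ),
      IsPsdFact M (fun i => Matrix.vecMulVec (v i) (v i))
        (fun j => Matrix.vecMulVec (w j) (w j))) ∧
    ∀ (p' q' : ℕ) (M' : Matrix (Fin p') (Fin q') ℝ),
      (∀ i j, M' i j = 0 ∨ M' i j = 1) → psdRank M' ≤ M'.rank :=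
  psdRank_le_sqrtRank_general M N hN hr
end

section
/- Let M_n be the n×n Euclidean distance matrix with entries (M_n)_{ij} = (i−j)². Then rank(M_n) ≤ 3 for all n, and rank_+(M_n) ≥ log₂(n), where rank_+ denotes the nonnegative rank. -/
/-!
`(i - j)² = i² · 1 + i · (-2j) + 1 · j²` factors the matrix through a space of dimension 3.

For the lower bound, take a nonnegative factorization `M i j = ⟨a i, b j⟩` of size `k`. Since the
diagonal vanishes and all summands are nonnegative, `a i` and `b i` have disjoint supports; if
`b i` and `b j` had the same support, then `⟨a i, b j⟩ = 0`, forcing `i = j`. So `j ↦ supp (b j)`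
is injective into the subsets of `Fin k`, whence `n ≤ 2 ^ k`.
-/

open Matrix

/-- `M` admits a nonnegative factorization of size `k`. -/
def HasNonnegFact {m n : Type*} (M : Matrix m n ℝ) (k : ℕ) : Prop :=
  ∃ (a : m → Fin k → ℝ) (b : n → Fin k → ℝ),
    (∀ i t, 0 ≤ a i t) ∧ (∀ j t, 0 ≤ b j t) ∧ ∀ i j, M i j = ∑ t, a i t * b j t

/-- The nonnegative rank of `M`. -/
noncomputable def nonnegRank {m n : Type*} (M : Matrix m n ℝ) : ℕ :=
  sInf {k | HasNonnegFact M k}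

theorem Matrix.rank_of_sub_sq_le_three {m n R : Type*} [Fintype m] [Fintype n] [CommRing R]
    [StrongRankCondition R] (x : m → R) (y : n → R) :
    (of fun i j => (x i - y j) ^ 2).rank ≤ 3 := by
  have hfactor : (of fun i j => (x i - y j) ^ 2) =
      of (fun i => ![x i ^ 2, x i, 1]) * of (fun t j => ![1, -2 * y j, y j ^ 2] t) := by
    ext i j
    simp only [of_apply, mul_apply, Fin.sum_univ_three, cons_val_zero, cons_val_one, cons_val_two,
      head_cons, tail_cons]
    ring
  rw [hfactor]
  exact (rank_mul_le_left _ _).trans ((rank_le_card_width _).trans_eq (Fintype.card_fin 3))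

theorem HasNonnegFact.of_nonneg {n : ℕ} {p : Type*} (M : Matrix (Fin n) p ℝ)
    (hM : ∀ i j, 0 ≤ M i j) : HasNonnegFact M n := by
  classical
  refine ⟨fun i t => if i = t then 1 else 0, fun j t => M t j, ?_, fun j t => hM t j, ?_⟩
  · intro i t
    positivity
  · intro i j
    simp [ite_mul]

theorem hasNonnegFact_nonnegRank {n : ℕ} {p : Type*} (M : Matrix (Fin n) p ℝ)
    (hM : ∀ i j, 0 ≤ M i j) : HasNonnegFact M (nonnegRank M) :=
  Nat.sInf_mem (s := {k | HasNonnegFact M k}) ⟨n, HasNonnegFact.of_nonneg M hM⟩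

theorem HasNonnegFact.card_le_two_pow {m : Type*} [Fintype m] {M : Matrix m m ℝ} {k : ℕ}
    (hdiag : ∀ i, M i i = 0) (hoff : ∀ i j, i ≠ j → M i j ≠ 0) (h : HasNonnegFact M k) :
    Fintype.card m ≤ 2 ^ k := by
  classical
  obtain ⟨a, b, ha, hb, hM⟩ := h
  let supp : m → Finset (Fin k) := fun j => {t | b j t ≠ 0}
  have hdisjoint : ∀ i t, a i t = 0 ∨ b i t = 0 := by
    intro i t
    have hsum : ∑ s, a i s * b i s = 0 := by rw [← hM, hdiag]
    exact mul_eq_zero.mp <| (Finset.sum_eq_zero_iff_of_nonneg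
      (fun s _ => mul_nonneg (ha i s) (hb i s))).mp hsum t (Finset.mem_univ t)
  have hinj : Function.Injective supp := by
    intro i j hij
    by_contra hne
    refine hoff i j hne (hM i j ▸ Finset.sum_eq_zero fun t _ => ?_)
    have hsupp : b j t ≠ 0 → b i t ≠ 0 := by
      simpa [supp] using (Finset.ext_iff.mp hij t).mpr
    rcases hdisjoint i t with hat | hbt
    · rw [hat, zero_mul]
    · rw [not_imp_not.mp hsupp hbt, mul_zero]
  simpa [Fintype.card_finset] using Fintype.card_le_of_injective supp hinj

theorem Real.logb_two_natCast_le_of_le_two_pow {n k : ℕ} (h : n ≤ 2 ^ k) : Real.logb 2 n ≤ k := by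
  rcases Nat.eq_zero_or_pos n with rfl | hpos
  · simp
  rw [Real.logb_le_iff_le_rpow one_lt_two (by exact_mod_cast hpos), Real.rpow_natCast]
  exact_mod_cast h

theorem euclidean_distance_matrix_ranks (n : ℕ) :
    (Matrix.of fun i j : Fin n => ((i : ℝ) - (j : ℝ)) ^ 2).rank ≤ 3 ∧
    Real.logb 2 n ≤
      (nonnegRank (Matrix.of fun i j : Fin n => ((i : ℝ) - (j : ℝ)) ^ 2) : ℝ) := by
  set M : Matrix (Fin n) (Fin n) ℝ := of fun i j : Fin n => ((i : ℝ) - (j : ℝ)) ^ 2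
  have hdiag : ∀ i, M i i = 0 := by simp [M]
  have hoff : ∀ i j, i ≠ j → M i j ≠ 0 := by
    intro i j hne
    simpa [M, sub_eq_zero, Fin.val_inj] using hne
  have hfact : HasNonnegFact M (nonnegRank M) :=
    hasNonnegFact_nonnegRank M fun i j => sq_nonneg _
  refine ⟨rank_of_sub_sq_le_three _ _, Real.logb_two_natCast_le_of_le_two_pow ?_⟩
  simpa using hfact.card_le_two_pow hdiag hoff
end
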